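/- arXiv:1912.10424 — 2 statements merged into one kernel-verified Lean document; each statement's English description precedes it below -/
import Mathlib

section
/- Let $\rho \in L^1(\mathbb{R})$ be non-negative with $\int_{\mathbb{R}} \rho = N \in \mathbb{N}$, $N \ge 1$. For $n \in \{1, \dots, N\}$ define $\phi_n(x) = \sqrt{\rho(x)/N}\, \exp\left(\frac{2\pi i n}{N}\int_{-\infty}^x \rho(t)\,dt\right)$. Then $(\phi_1, \dots, \phi_N)$ is an orthonormal family in $L^2(\mathbb{R}, \mathbb{C})$, and $\sum_{n=1}^N |\phi_n(x)|^2 = \rho(x)$ for almost every $x$. -/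
open MeasureTheory

open Filter Set Topology in
/-- Pushforward of the measure `ρ dx` under its CDF is Lebesgue measure on `(0, M]`. -/
lemma cdf_pushforward (ρ : ℝ → ℝ) (hmeas : Measurable ρ) (hnonneg : ∀ x, 0 ≤ ρ x)
    (hint : Integrable ρ) (M : ℝ) (hM : 0 < M) (hmass : ∫ x, ρ x = M) :
    (volume.withDensity fun x => ENNReal.ofReal (ρ x)).map
        (fun x => ∫ t in Set.Iic x, ρ t) = volume.restrict (Set.Ioc 0 M) := by
  set F : ℝ → ℝ := fun x => ∫ t in Set.Iic x, ρ t with hF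
  set μ : Measure ℝ := volume.withDensity fun x => ENNReal.ofReal (ρ x) with hμ
  have hF_mono : Monotone F := fun a b hab =>
    setIntegral_mono_set hint.integrableOn (Eventually.of_forall hnonneg)
      (Iic_subset_Iic.2 hab).eventuallyLE
  have hF_cont : Continuous F := by
    have h1 : Continuous fun x => ∫ t in (0:ℝ)..x, ρ t := hint.continuous_primitive 0
    have h2 : ∀ x, F x = F 0 + ∫ t in (0:ℝ)..x, ρ t := by
      intro x
      rw [← intervalIntegral.integral_Iic_sub_Iic hint.integrableOn hint.integrableOn]
      ring
    rw [show F = fun x => F 0 + ∫ t in (0:ℝ)..x, ρ t from funext h2]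
    exact continuous_const.add h1
  have hF_meas : Measurable F := hF_cont.measurable
  have hF_nonneg : ∀ x, 0 ≤ F x := fun x =>
    setIntegral_nonneg measurableSet_Iic fun t _ => hnonneg t
  have hF_le : ∀ x, F x ≤ M := fun x => hmass ▸
    setIntegral_le_integral hint (Eventually.of_forall hnonneg)
  have hμIic : ∀ t, μ (Set.Iic t) = ENNReal.ofReal (F t) := by
    intro t
    rw [hμ, withDensity_apply _ measurableSet_Iic,
      ← ofReal_integral_eq_lintegral_ofReal hint.integrableOn
        (Eventually.of_forall hnonneg)]
  have hμuniv : μ Set.univ = ENNReal.ofReal M := by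
    rw [hμ, withDensity_apply _ MeasurableSet.univ, Measure.restrict_univ,
      ← ofReal_integral_eq_lintegral_ofReal hint (Eventually.of_forall hnonneg), hmass]
  have hFtop : Tendsto F atTop (𝓝 M) := by
    have := tendsto_setIntegral_of_monotone (f := ρ) (μ := volume)
      (s := fun x : ℝ => Iic x) (fun x => measurableSet_Iic)
      (fun a b hab => Iic_subset_Iic.2 hab) (by rw [iUnion_Iic]; exact hint.integrableOn)
    rw [iUnion_Iic] at this
    simpa [hmass, Measure.restrict_univ] using this
  have hFbot : Tendsto F atBot (𝓝 0) := by
    have hseq := tendsto_setIntegral_of_antitone (f := ρ) (μ := volume)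
      (s := fun n : ℕ => Iic (-(n:ℝ))) (fun n => measurableSet_Iic)
      (fun a b hab => Iic_subset_Iic.2 (neg_le_neg (Nat.cast_le.2 hab)))
      ⟨0, hint.integrableOn⟩
    have hempty : (⋂ n : ℕ, Iic (-(n:ℝ))) = ∅ := by
      ext y
      simp only [mem_iInter, mem_Iic, mem_empty_iff_false, iff_false, not_forall, not_le]
      obtain ⟨n, hn⟩ := exists_nat_gt (-y)
      exact ⟨n, by linarith⟩
    rw [hempty] at hseq
    simp only [Measure.restrict_empty, integral_zero_measure] at hseq
    refine tendsto_order.2 ⟨fun b hb => Eventually.of_forall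
      (fun x => lt_of_lt_of_le hb (hF_nonneg x)), fun b hb => ?_⟩
    obtain ⟨n, hn⟩ := (hseq.eventually (eventually_lt_nhds hb)).exists
    filter_upwards [eventually_le_atBot (-(n:ℝ))] with x hx
    exact lt_of_le_of_lt (hF_mono hx) hn
  haveI : IsFiniteMeasure μ := isFiniteMeasure_withDensity_ofReal hint.2
  haveI : IsFiniteMeasure (μ.map F) := by
    constructor
    rw [Measure.map_apply hF_meas MeasurableSet.univ]
    exact measure_lt_top μ _
  refine Measure.ext_of_Iic (μ.map F) _ (fun a => ?_)
  rw [Measure.map_apply hF_meas measurableSet_Iic,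
    Measure.restrict_apply measurableSet_Iic]
  have hset : Set.Iic a ∩ Set.Ioc 0 M = Set.Ioc 0 (min a M) := by
    ext x; simp only [mem_inter_iff, mem_Iic, mem_Ioc, le_min_iff]; tauto
  rw [hset, Real.volume_Ioc, sub_zero]
  rcases lt_or_ge a 0 with ha | ha
  · have : F ⁻¹' Set.Iic a = ∅ := by
      ext x; simp only [mem_preimage, mem_Iic, mem_empty_iff_false, iff_false, not_le]
      exact lt_of_lt_of_le ha (hF_nonneg x)
    rw [this, measure_empty, min_eq_left (ha.le.trans hM.le),
      Eq.symm (ENNReal.ofReal_eq_zero.2 ha.le)]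
  rcases le_or_gt M a with haM | haM
  · have : F ⁻¹' Set.Iic a = Set.univ := by
      ext x; simp only [mem_preimage, mem_Iic, mem_univ, iff_true]
      exact (hF_le x).trans haM
    rw [this, hμuniv, min_eq_right haM]
  · -- 0 ≤ a < M
    rw [min_eq_left haM.le]
    set S : Set ℝ := F ⁻¹' Set.Iic a with hS
    rcases S.eq_empty_or_nonempty with hSe | hSne
    · -- then a must be ≤ 0, so a = 0
      have ha0 : a = 0 := by
        by_contra h
        have hapos : 0 < a := lt_of_le_of_ne ha (Ne.symm h)
        obtain ⟨x, hx⟩ := (hFbot.eventually (eventually_lt_nhds hapos)).exists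
        have hxS : x ∈ S := by simpa [hS] using hx.le
        rw [hSe] at hxS
        exact hxS
      rw [hSe, measure_empty, ha0, ENNReal.ofReal_zero]
    · have hbdd : BddAbove S := by
        obtain ⟨x₀, hx₀⟩ := (hFtop.eventually (eventually_gt_nhds haM)).exists_forall_of_atTop
        refine ⟨x₀, fun x hx => ?_⟩
        by_contra h
        exact absurd (hx : F x ≤ a) (not_le.2 (hx₀ x (le_of_not_ge h)))
      have hSclosed : IsClosed S := IsClosed.preimage hF_cont isClosed_Iic
      set t := sSup S with ht
      have htS : t ∈ S := hSclosed.csSup_mem hSne hbdd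
      have hFt_le : F t ≤ a := htS
      have hFt_ge : a ≤ F t := by
        have h1 : Tendsto F (nhdsWithin t (Set.Ioi t)) (𝓝 (F t)) :=
          (hF_cont.tendsto t).mono_left nhdsWithin_le_nhds
        refine ge_of_tendsto h1 ?_
        filter_upwards [self_mem_nhdsWithin] with s hs
        by_contra h
        exact absurd (le_csSup hbdd (le_of_not_ge h : F s ≤ a)) (not_le.2 hs)
      have hSt : S = Set.Iic t := by
        apply Subset.antisymm (fun x hx => le_csSup hbdd hx)
        intro x hx
        exact (hF_mono hx).trans hFt_le
      rw [hSt, hμIic, le_antisymm hFt_le hFt_ge]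

/-- The March–Young / Harriman orbitals in one dimension: the phase-modulated square
roots of `ρ/N` form an orthonormal family in `L²(ℝ, ℂ)` whose densities add up to `ρ`. -/
theorem stmt_3 (N : ℕ) (hN : 1 ≤ N)
    (ρ : ℝ → ℝ) (hmeas : Measurable ρ) (hnonneg : ∀ x, 0 ≤ ρ x)
    (hint : Integrable ρ) (hmass : ∫ x, ρ x = N)
    (φ : ℕ → ℝ → ℂ)
    (hφ : ∀ n x, φ n x =
      (Real.sqrt (ρ x / N) : ℂ) *
        Complex.exp (2 * (Real.pi : ℂ) * Complex.I * (n : ℂ) / (N : ℂ) *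
          ((∫ t in Set.Iic x, ρ t : ℝ) : ℂ))) :
    (∀ m ∈ Finset.Icc 1 N, ∀ n ∈ Finset.Icc 1 N,
        ∫ x, (starRingEnd ℂ) (φ m x) * φ n x = if m = n then (1 : ℂ) else 0) ∧
    (∀ᵐ x ∂(volume : Measure ℝ), ∑ n ∈ Finset.Icc 1 N, ‖φ n x‖ ^ 2 = ρ x) := by
  have hNR : (0:ℝ) < (N:ℝ) := by exact_mod_cast Nat.lt_of_lt_of_le Nat.zero_lt_one hN
  have hNC : (N:ℂ) ≠ 0 := by exact_mod_cast Nat.cast_ne_zero.2 (by omega : N ≠ 0)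
  set F : ℝ → ℝ := fun x => ∫ t in Set.Iic x, ρ t with hFdef
  have hkey := cdf_pushforward ρ hmeas hnonneg hint (N:ℝ) hNR hmass
  have hF_cont : Continuous F := by
    have h1 : Continuous fun x => ∫ t in (0:ℝ)..x, ρ t := hint.continuous_primitive 0
    have h2 : ∀ x, F x = F 0 + ∫ t in (0:ℝ)..x, ρ t := by
      intro x
      rw [← intervalIntegral.integral_Iic_sub_Iic hint.integrableOn hint.integrableOn]
      ring
    rw [show F = fun x => F 0 + ∫ t in (0:ℝ)..x, ρ t from funext h2]
    exact continuous_const.add h1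
  have hF_meas : Measurable F := hF_cont.measurable
  constructor
  · intro m hm n hn
    set c : ℂ := 2 * (Real.pi:ℂ) * Complex.I * ((n:ℂ) - (m:ℂ)) / (N:ℂ) with hc
    have step1 : ∀ x, (starRingEnd ℂ) (φ m x) * φ n x
        = (N:ℂ)⁻¹ * ((ρ x : ℂ) * Complex.exp (c * ((F x : ℝ) : ℂ))) := by
      intro x
      rw [hφ, hφ]
      rw [map_mul, Complex.conj_ofReal, ← Complex.exp_conj]
      have hconj : (starRingEnd ℂ) (2 * (Real.pi:ℂ) * Complex.I * (m:ℂ) / (N:ℂ) *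
          ((F x : ℝ):ℂ)) = -(2 * (Real.pi:ℂ) * Complex.I * (m:ℂ) / (N:ℂ) * ((F x:ℝ):ℂ)) := by
        simp only [map_mul, map_div₀, Complex.conj_I, Complex.conj_ofReal, map_ofNat,
          map_natCast]
        ring
      rw [hconj]
      have hsq : ((Real.sqrt (ρ x / N) : ℝ):ℂ) * ((Real.sqrt (ρ x / N) : ℝ):ℂ)
          = ((ρ x : ℝ):ℂ) / (N:ℂ) := by
        rw [← Complex.ofReal_mul, Real.mul_self_sqrt (div_nonneg (hnonneg x) hNR.le)]
        push_cast
        ring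
      calc ((Real.sqrt (ρ x / N) : ℝ):ℂ) *
            Complex.exp (-(2 * (Real.pi:ℂ) * Complex.I * (m:ℂ) / (N:ℂ) * ((F x:ℝ):ℂ))) *
            (((Real.sqrt (ρ x / N) : ℝ):ℂ) *
            Complex.exp (2 * (Real.pi:ℂ) * Complex.I * (n:ℂ) / (N:ℂ) * ((F x:ℝ):ℂ)))
          = (((Real.sqrt (ρ x / N) : ℝ):ℂ) * ((Real.sqrt (ρ x / N) : ℝ):ℂ)) *
            (Complex.exp (-(2 * (Real.pi:ℂ) * Complex.I * (m:ℂ) / (N:ℂ) * ((F x:ℝ):ℂ)) +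
              2 * (Real.pi:ℂ) * Complex.I * (n:ℂ) / (N:ℂ) * ((F x:ℝ):ℂ))) := by
            rw [Complex.exp_add]; ring
        _ = (N:ℂ)⁻¹ * ((ρ x : ℂ) * Complex.exp (c * ((F x : ℝ) : ℂ))) := by
            rw [hsq, hc]
            have : -(2 * (Real.pi:ℂ) * Complex.I * (m:ℂ) / (N:ℂ) * ((F x:ℝ):ℂ)) +
                2 * (Real.pi:ℂ) * Complex.I * (n:ℂ) / (N:ℂ) * ((F x:ℝ):ℂ)
                = 2 * (Real.pi:ℂ) * Complex.I * ((n:ℂ) - (m:ℂ)) / (N:ℂ) * ((F x:ℝ):ℂ) := by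
              ring
            rw [this]
            ring
    have hg : Continuous fun s : ℝ => Complex.exp (c * (s:ℂ)) :=
      Complex.continuous_exp.comp (continuous_const.mul Complex.continuous_ofReal)
    have step2 : ∫ x, (ρ x : ℂ) * Complex.exp (c * ((F x : ℝ):ℂ))
        = ∫ s in Set.Ioc (0:ℝ) (N:ℝ), Complex.exp (c * (s:ℂ)) := by
      calc ∫ x, (ρ x : ℂ) * Complex.exp (c * ((F x : ℝ):ℂ))
          = ∫ x, (Real.toNNReal (ρ x)) • Complex.exp (c * ((F x : ℝ):ℂ)) := by
            refine integral_congr_ae (Filter.Eventually.of_forall fun x => ?_)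
            simp only [NNReal.smul_def, Real.coe_toNNReal _ (hnonneg x), Complex.real_smul]
        _ = ∫ x, Complex.exp (c * ((F x : ℝ):ℂ))
              ∂(volume.withDensity fun x => ENNReal.ofReal (ρ x)) := by
            rw [show (fun x => ENNReal.ofReal (ρ x))
                = fun x => (((fun y => Real.toNNReal (ρ y)) x : NNReal) : ENNReal) from rfl,
              integral_withDensity_eq_integral_smul hmeas.real_toNNReal]
        _ = ∫ s, Complex.exp (c * (s:ℂ))
              ∂((volume.withDensity fun x => ENNReal.ofReal (ρ x)).map F) :=
            (integral_map hF_meas.aemeasurable hg.aestronglyMeasurable).symm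
        _ = ∫ s in Set.Ioc (0:ℝ) (N:ℝ), Complex.exp (c * (s:ℂ)) := by rw [hkey]
    rw [show (fun x => (starRingEnd ℂ) (φ m x) * φ n x)
        = fun x => (N:ℂ)⁻¹ * ((ρ x : ℂ) * Complex.exp (c * ((F x : ℝ):ℂ)))
      from funext step1]
    rw [integral_const_mul, step2,
      ← intervalIntegral.integral_of_le hNR.le]
    by_cases hmn : m = n
    · subst hmn
      have hc0 : c = 0 := by rw [hc]; ring
      simp [hc0, hNC]
    · have hc0 : c ≠ 0 := by
        rw [hc]
        apply div_ne_zero _ hNC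
        refine mul_ne_zero (mul_ne_zero (mul_ne_zero two_ne_zero ?_) Complex.I_ne_zero) ?_
        · exact_mod_cast Real.pi_ne_zero
        · rw [sub_ne_zero]
          exact_mod_cast fun h => hmn (Nat.cast_injective h).symm
      rw [integral_exp_mul_complex hc0]
      have hcN : c * (N:ℝ) = (((n:ℤ) - (m:ℤ) : ℤ):ℂ) * (2 * (Real.pi:ℂ) * Complex.I) := by
        rw [hc]
        push_cast
        field_simp
      rw [if_neg hmn, hcN, Complex.exp_int_mul_two_pi_mul_I]
      simp
  · refine Filter.Eventually.of_forall fun x => ?_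
    have hx : ∀ n : ℕ, ‖φ n x‖ ^ 2 = ρ x / N := by
      intro n
      rw [hφ, norm_mul,
        show 2 * (Real.pi:ℂ) * Complex.I * (n:ℂ) / (N:ℂ) * ((F x:ℝ):ℂ)
          = ((2 * Real.pi * (n:ℝ) / (N:ℝ) * F x : ℝ):ℂ) * Complex.I by push_cast; ring,
        Complex.norm_exp_ofReal_mul_I, mul_one, Complex.norm_real, Real.norm_eq_abs,
        abs_of_nonneg (Real.sqrt_nonneg _),
        Real.sq_sqrt (div_nonneg (hnonneg x) (Nat.cast_nonneg N))]
    rw [Finset.sum_congr rfl fun n _ => hx n, Finset.sum_const, Nat.card_Icc]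
    simp only [nsmul_eq_mul]
    rw [show N + 1 - 1 = N from rfl]
    field_simp
end

section
/- Let $T : \mathbb{R} \to \mathbb{R}$ be defined as follows. Let $\rho \in L^1(\mathbb{R})$ be non-negative with $\int_{\mathbb{R}} \rho = N \in \mathbb{N}$, and choose $r_0 = -\infty < r_1 < \dots < r_{N-1} < r_N = +\infty$ such that $\int_{r_{i-1}}^{r_i} \rho = 1$ for each $i$. Define $T$ on $(r_{k-1}, r_k)$ (for $k < N$) as the unique increasing map with $T \# (\rho \mathbf{1}_{(r_{k-1}, r_k)}) = \rho \mathbf{1}_{(r_k, r_{k+1})}$, i.e. $\int_{r_{k-1}}^x \rho = \int_{r_k}^{T(x)} \rho$. Then the symmetrized Monge state $\mathbb{P} = \mathrm{Sym} \int_{\mathbb{R}} \delta_y \otimes \delta_{Ty} \otimes \cdots \otimes \delta_{T^{N-1} y}\, \frac{\rho(y)}{N}\,dy$ is a symmetric probability measure on $\mathbb{R}^N$ whose one-particle density equals $\rho$. -/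
open MeasureTheory Set
open scoped ENNReal

noncomputable section

def cellSet {N : ℕ} (r : Fin (N + 1) → EReal) (k : Fin N) : Set ℝ :=
  {x : ℝ | r k.castSucc < (x : EReal) ∧ (x : EReal) < r k.succ}

namespace MongeAux

variable {N : ℕ} {r : Fin (N + 1) → EReal}

lemma cell_isOpen (r : Fin (N + 1) → EReal) (k : Fin N) : IsOpen (cellSet r k) := by
  have h : cellSet r k = ((↑) : ℝ → EReal) ⁻¹' (Set.Ioo (r k.castSucc) (r k.succ)) := rfl
  rw [h]
  exact isOpen_Ioo.preimage continuous_coe_real_ereal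

lemma cell_meas (r : Fin (N + 1) → EReal) (k : Fin N) : MeasurableSet (cellSet r k) :=
  (cell_isOpen r k).measurableSet

lemma cell_nonempty (hrmono : StrictMono r) (k : Fin N) : (cellSet r k).Nonempty := by
  obtain ⟨y, h1, h2⟩ := EReal.exists_between_coe_real (hrmono k.castSucc_lt_succ)
  exact ⟨y, h1, h2⟩

lemma cell_disjoint (hrmono : StrictMono r) :
    Pairwise (Function.onFun Disjoint (cellSet r)) := by
  have key : ∀ k l : Fin N, k < l → Disjoint (cellSet r k) (cellSet r l) := by
    intro k l hkl
    rw [Set.disjoint_left]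
    rintro x ⟨_, hx2⟩ ⟨hy1, _⟩
    have h : r k.succ ≤ r l.castSucc := hrmono.monotone (by
      rwa [Fin.succ_le_castSucc_iff])
    exact absurd (hx2.trans_le (h.trans hy1.le)) (lt_irrefl _)
  intro k l hkl
  rcases hkl.lt_or_gt with h | h
  · exact key _ _ h
  · exact (key _ _ h).symm

lemma cell_cover (hr0 : r 0 = ⊥) (hrN : r (Fin.last N) = ⊤) (x : ℝ)
    (hx : ∀ j : Fin (N + 1), r j ≠ (x : EReal)) : ∃ k : Fin N, x ∈ cellSet r k := by
  classical
  set s : Finset (Fin (N + 1)) := Finset.univ.filter (fun j => r j < (x : EReal)) with hs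
  have h0 : (0 : Fin (N + 1)) ∈ s := by
    simp only [hs, Finset.mem_filter, Finset.mem_univ, true_and, hr0]
    exact EReal.bot_lt_coe x
  have hne : s.Nonempty := ⟨0, h0⟩
  set m := s.max' hne with hm
  have hmlt : r m < (x : EReal) := by
    have := s.max'_mem hne
    simpa [hs] using this
  have hmne : m ≠ Fin.last N := by
    intro h
    rw [h, hrN] at hmlt
    exact absurd hmlt (by simp)
  obtain ⟨k, hk⟩ : ∃ k : Fin N, k.castSucc = m := ⟨(m.castLT (Fin.lt_last_iff_ne_last.2 hmne)), rfl⟩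
  refine ⟨k, ?_, ?_⟩
  · rwa [hk]
  · by_contra hcon
    push_neg at hcon
    have hlt : r k.succ < (x : EReal) := lt_of_le_of_ne hcon (hx k.succ)
    have : k.succ ∈ s := by simp [hs, hlt]
    have := s.le_max' _ this
    rw [← hm, ← hk] at this
    exact absurd (lt_of_lt_of_le k.castSucc_lt_succ this) (lt_irrefl _)

def nu (ρ : ℝ → ℝ) : Measure ℝ := volume.withDensity fun x => ENNReal.ofReal (ρ x)

variable {ρ : ℝ → ℝ}

lemma nu_apply_ofReal (hnn : ∀ x, 0 ≤ ρ x) (hint : Integrable ρ)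
    {A : Set ℝ} (hA : MeasurableSet A) :
    nu ρ A = ENNReal.ofReal (∫ x in A, ρ x) := by
  rw [nu, withDensity_apply _ hA]
  exact (ofReal_integral_eq_lintegral_ofReal hint.integrableOn
    (Filter.Eventually.of_forall hnn)).symm

lemma nu_singleton (x : ℝ) : nu ρ {x} = 0 :=
  withDensity_absolutelyContinuous volume _ (Real.volume_singleton)

lemma nu_univ (hnn : ∀ x, 0 ≤ ρ x) (hint : Integrable ρ) {N : ℕ} (hmass : ∫ x, ρ x = N) :
    nu ρ univ = N := by
  rw [nu_apply_ofReal hnn hint MeasurableSet.univ, setIntegral_univ, hmass,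
    ENNReal.ofReal_natCast]

lemma nu_fin (hnn : ∀ x, 0 ≤ ρ x) (hint : Integrable ρ) {N : ℕ} (hmass : ∫ x, ρ x = N) :
    IsFiniteMeasure (nu ρ) := by
  constructor
  rw [nu_univ hnn hint hmass]
  exact ENNReal.natCast_lt_top N

lemma ereal_cases (x : EReal) : x = ⊥ ∨ (∃ b : ℝ, x = b) ∨ x = ⊤ := by
  induction x using EReal.rec with
  | bot => exact Or.inl rfl
  | coe b => exact Or.inr (Or.inl ⟨b, rfl⟩)
  | top => exact Or.inr (Or.inr rfl)


/-- a monotone cofinal sequence in a cell -/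
lemma exists_cofinal (hrmono : StrictMono r) (k : Fin N) :
    ∃ u : ℕ → ℝ, Monotone u ∧ (∀ n, u n ∈ cellSet r k) ∧
      ∀ y ∈ cellSet r k, ∃ n, y ≤ u n := by
  obtain ⟨c, hc1, hc2⟩ : (cellSet r k).Nonempty := by
    obtain ⟨y, h1, h2⟩ := EReal.exists_between_coe_real (hrmono k.castSucc_lt_succ)
    exact ⟨y, h1, h2⟩
  rcases ereal_cases (r k.succ) with hb | ⟨b, hb⟩ | hb
  · rw [hb] at hc2; exact absurd hc2 (by simp)
  · have hcb : c < b := by rw [hb] at hc2; exact_mod_cast hc2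
    have hpos : (0:ℝ) < b - c := by linarith
    refine ⟨fun n => b - (b - c) / (n + 1), ?_, fun n => ⟨?_, ?_⟩, fun y hy => ?_⟩
    · intro a b' hab
      have : (b - c) / (b' + 1) ≤ (b - c) / (a + 1) := by
        apply div_le_div_of_nonneg_left hpos.le (by positivity)
        exact_mod_cast by omega
      simp only
      linarith
    · have h1 : (b - c) / (n + 1) ≤ b - c := by
        rw [div_le_iff₀ (by positivity)]
        nlinarith [hpos.le]
      have : c ≤ b - (b - c) / (n + 1) := by linarith
      exact lt_of_lt_of_le hc1 (by exact_mod_cast this)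
    · rw [hb]
      have : b - (b - c) / (n + 1) < b := by
        have : (0:ℝ) < (b - c) / (n + 1) := by positivity
        linarith
      exact_mod_cast this
    · have hyb : y < b := by
        have := hy.2; rw [hb] at this; exact_mod_cast this
      obtain ⟨n, hn⟩ := exists_nat_one_div_lt
        (div_pos (show (0:ℝ) < b - y by linarith) (show (0:ℝ) < b - c by linarith))
      refine ⟨n, ?_⟩
      have h2 : (b - c) / (n + 1) < b - y := by
        rw [div_lt_iff₀ (by positivity)]
        rw [div_lt_div_iff₀ (by positivity) (by positivity)] at hn
        nlinarith
      simp only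
      linarith
  · refine ⟨fun n => max c n, ?_, fun n => ⟨?_, ?_⟩, fun y hy => ?_⟩
    · intro a b hab
      exact max_le_max le_rfl (by exact_mod_cast hab)
    · exact lt_of_lt_of_le hc1 (by exact_mod_cast le_max_left c n)
    · rw [hb]; exact EReal.coe_lt_top _
    · obtain ⟨n, hn⟩ := exists_nat_gt y
      exact ⟨n, le_trans hn.le (le_max_right c n)⟩

/-- an antitone strictly coinitial sequence in a cell -/
lemma exists_coinitial (hrmono : StrictMono r) (k : Fin N) :
    ∃ w : ℕ → ℝ, Antitone w ∧ (∀ n, w n ∈ cellSet r k) ∧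
      ∀ y ∈ cellSet r k, ∃ n, w n < y := by
  obtain ⟨c, hc1, hc2⟩ : (cellSet r k).Nonempty := by
    obtain ⟨y, h1, h2⟩ := EReal.exists_between_coe_real (hrmono k.castSucc_lt_succ)
    exact ⟨y, h1, h2⟩
  rcases ereal_cases (r k.castSucc) with hb | ⟨b, hb⟩ | hb
  · refine ⟨fun n => min c (-n), ?_, fun n => ⟨?_, ?_⟩, fun y hy => ?_⟩
    · intro a b hab
      apply min_le_min le_rfl
      simp only [neg_le_neg_iff]
      exact_mod_cast hab
    · rw [hb]; exact EReal.bot_lt_coe _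
    · exact lt_of_le_of_lt (by exact_mod_cast min_le_left c (-(n:ℝ))) hc2
    · obtain ⟨n, hn⟩ := exists_nat_gt (-y)
      refine ⟨n, lt_of_le_of_lt (min_le_right c _) (by linarith)⟩
  · have hcb : b < c := by rw [hb] at hc1; exact_mod_cast hc1
    have hpos : (0:ℝ) < c - b := by linarith
    refine ⟨fun n => b + (c - b) / (n + 1), ?_, fun n => ⟨?_, ?_⟩, fun y hy => ?_⟩
    · intro a b' hab
      have : (c - b) / (b' + 1) ≤ (c - b) / (a + 1) := by
        apply div_le_div_of_nonneg_left hpos.le (by positivity)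
        exact_mod_cast by omega
      simp only
      linarith
    · rw [hb]
      have : b < b + (c - b) / (n + 1) := by
        have : (0:ℝ) < (c - b) / (n + 1) := by positivity
        linarith
      exact_mod_cast this
    · have h1 : (c - b) / (n + 1) ≤ c - b := by
        rw [div_le_iff₀ (by positivity)]
        nlinarith [hpos.le]
      have : b + (c - b) / (n + 1) ≤ c := by linarith
      exact lt_of_le_of_lt (by exact_mod_cast this) hc2
    · have hby : b < y := by
        have := hy.1; rw [hb] at this; exact_mod_cast this
      obtain ⟨n, hn⟩ := exists_nat_one_div_lt
        (div_pos (show (0:ℝ) < y - b by linarith) (show (0:ℝ) < c - b by linarith))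
      refine ⟨n, ?_⟩
      have h2 : (c - b) / (n + 1) < y - b := by
        rw [div_lt_iff₀ (by positivity)]
        rw [div_lt_div_iff₀ (by positivity) (by positivity)] at hn
        nlinarith
      simp only
      linarith
  · rw [hb] at hc1; exact absurd hc1 (by simp)

section CellMap

variable {N : ℕ} [NeZero N] {ρ : ℝ → ℝ} {r : Fin (N + 1) → EReal} {T : ℝ → ℝ}

lemma nu_fin' (hnn : ∀ x, 0 ≤ ρ x) (hint : Integrable ρ) : IsFiniteMeasure (nu ρ) := by
  constructor
  rw [nu_apply_ofReal hnn hint MeasurableSet.univ]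
  exact ENNReal.ofReal_lt_top

lemma cell_map (hnn : ∀ x, 0 ≤ ρ x) (hint : Integrable ρ)
    (hrmono : StrictMono r)
    (hcellmass : ∀ k : Fin N, ∫ x in cellSet r k, ρ x = 1)
    (hTmeas : Measurable T)
    (hTmono : ∀ k : Fin N, MonotoneOn T (cellSet r k))
    (hTmaps : ∀ k : Fin N, ∀ x ∈ cellSet r k, T x ∈ cellSet r (k + 1))
    (hTpush : ∀ k : Fin N, ∀ x ∈ cellSet r k,
      ∫ t in {t : ℝ | r k.castSucc < (t : EReal) ∧ t ≤ x}, ρ t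
        = ∫ t in {t : ℝ | r (k + 1).castSucc < (t : EReal) ∧ t ≤ T x}, ρ t)
    (k : Fin N) :
    ((nu ρ).restrict (cellSet r k)).map T = (nu ρ).restrict (cellSet r (k + 1)) := by
  classical
  haveI hfin : IsFiniteMeasure (nu ρ) := nu_fin' hnn hint
  haveI : IsFiniteMeasure (((nu ρ).restrict (cellSet r k)).map T) :=
    Measure.isFiniteMeasure_map _ _
  set ν := nu ρ with hν
  have hCk : MeasurableSet (cellSet r k) := cell_meas r k
  have hCk1 : MeasurableSet (cellSet r (k + 1)) := cell_meas r (k + 1)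
  refine Measure.ext_of_Iic _ _ (fun a => ?_)
  rw [Measure.map_apply hTmeas measurableSet_Iic,
    Measure.restrict_apply (hTmeas measurableSet_Iic),
    Measure.restrict_apply measurableSet_Iic]
  set S : Set ℝ := T ⁻¹' Iic a ∩ cellSet r k with hSdef
  set F : ℝ → ℝ≥0∞ := fun x => ν (Iic x ∩ cellSet r k) with hFdef
  set G : ℝ → ℝ≥0∞ := fun x => ν (Iic x ∩ cellSet r (k + 1)) with hGdef
  show ν S = G a
  -- basic facts
  have hFmono : Monotone F := fun x y hxy =>
    measure_mono (inter_subset_inter (Iic_subset_Iic.2 hxy) Subset.rfl)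
  have hGmono : Monotone G := fun x y hxy =>
    measure_mono (inter_subset_inter (Iic_subset_Iic.2 hxy) Subset.rfl)
  have hpush' : ∀ x ∈ cellSet r k, F x = G (T x) := by
    intro x hx
    have hAeq : {t : ℝ | r k.castSucc < (t : EReal) ∧ t ≤ x} = Iic x ∩ cellSet r k := by
      ext t
      constructor
      · rintro ⟨h1, h2⟩
        exact ⟨h2, h1, lt_of_le_of_lt (EReal.coe_le_coe_iff.2 h2) hx.2⟩
      · rintro ⟨h1, h2, _⟩
        exact ⟨h2, h1⟩
    have hBeq : {t : ℝ | r (k + 1).castSucc < (t : EReal) ∧ t ≤ T x}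
        = Iic (T x) ∩ cellSet r (k + 1) := by
      have hTx := hTmaps k x hx
      ext t
      constructor
      · rintro ⟨h1, h2⟩
        exact ⟨h2, h1, lt_of_le_of_lt (EReal.coe_le_coe_iff.2 h2) hTx.2⟩
      · rintro ⟨h1, h2, _⟩
        exact ⟨h2, h1⟩
    have hI := hTpush k x hx
    rw [hAeq, hBeq] at hI
    rw [hFdef, hGdef]
    simp only
    rw [hν, nu_apply_ofReal hnn hint (measurableSet_Iic.inter hCk),
      nu_apply_ofReal hnn hint (measurableSet_Iic.inter hCk1), hI]
  have hmemS : ∀ x, x ∈ S ↔ T x ≤ a ∧ x ∈ cellSet r k := by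
    intro x
    simp [hSdef, Set.mem_preimage, Set.mem_Iic]
  have hdown : ∀ x ∈ S, ∀ y ∈ cellSet r k, y ≤ x → y ∈ S := by
    intro x hx y hy hyx
    rcases (hmemS x).1 hx with ⟨hTx, hxk⟩
    exact (hmemS y).2 ⟨le_trans (hTmono k hy hxk hyx) hTx, hy⟩
  have hH1 : ∀ x ∈ S, F x ≤ G a := by
    intro x hx
    rcases (hmemS x).1 hx with ⟨hTx, hxk⟩
    rw [hpush' x hxk]
    exact hGmono hTx
  have hH2 : ∀ x ∈ cellSet r k, x ∉ S → G a ≤ F x := by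
    intro x hxk hxS
    have hTx : a ≤ T x := by
      by_contra h
      exact hxS ((hmemS x).2 ⟨(not_le.1 h).le, hxk⟩)
    rw [hpush' x hxk]
    exact hGmono hTx
  have hmass' : ν (cellSet r k) = ν (cellSet r (k + 1)) := by
    rw [hν, nu_apply_ofReal hnn hint hCk, nu_apply_ofReal hnn hint hCk1,
      hcellmass k, hcellmass (k + 1)]
  have hGle : G a ≤ ν (cellSet r k) := by
    rw [hmass']
    exact measure_mono inter_subset_right
  by_cases hS : S = ∅
  · -- empty case
    rw [hS, measure_empty]
    obtain ⟨w, hwanti, hwmem, hwco⟩ := exists_coinitial hrmono k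
    have hinter : ⋂ n, (Iic (w n) ∩ cellSet r k) = ∅ := by
      ext y
      simp only [mem_iInter, mem_empty_iff_false, iff_false, not_forall]
      by_contra h
      push_neg at h
      obtain ⟨n, hn⟩ := hwco y (h 0).2
      exact absurd (h n).1 (not_le.2 hn)
    have hanti : Antitone (fun n => Iic (w n) ∩ cellSet r k) := fun m n h =>
      inter_subset_inter (Iic_subset_Iic.2 (hwanti h)) Subset.rfl
    have h0 : ν (⋂ n, (Iic (w n) ∩ cellSet r k)) = ⨅ n, F (w n) :=
      hanti.measure_iInter (fun n => (measurableSet_Iic.inter hCk).nullMeasurableSet)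
        ⟨0, measure_ne_top _ _⟩
    have hinf0 : ⨅ n, F (w n) = 0 := by rw [← h0, hinter, measure_empty]
    have hGle0 : G a ≤ 0 := by
      rw [← hinf0]
      refine le_iInf fun n => hH2 (w n) (hwmem n) ?_
      rw [hS]
      exact notMem_empty _
    exact (le_zero_iff.1 hGle0).symm
  · have hSne : S.Nonempty := nonempty_iff_ne_empty.2 hS
    obtain ⟨x₀, hx₀⟩ := hSne
    by_cases hbdd : BddAbove S
    · set s := sSup S with hsdef
      have hsub1 : Iio s ∩ cellSet r k ⊆ S := by
        rintro y ⟨hy1, hy2⟩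
        obtain ⟨x, hxS, hyx⟩ := exists_lt_of_lt_csSup ⟨x₀, hx₀⟩ hy1
        exact hdown x hxS y hy2 hyx.le
      have hsub2 : S ⊆ Iic s ∩ cellSet r k := fun x hx => ⟨le_csSup hbdd hx, hx.2⟩
      have hIicIio : ν (Iic s ∩ cellSet r k) = ν (Iio s ∩ cellSet r k) := by
        apply le_antisymm
        · calc ν (Iic s ∩ cellSet r k) ≤ ν ((Iio s ∩ cellSet r k) ∪ {s}) := by
                apply measure_mono
                rintro y ⟨hy1, hy2⟩
                rcases lt_or_eq_of_le (show y ≤ s from hy1) with h | h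
                · exact Or.inl ⟨h, hy2⟩
                · exact Or.inr h
          _ ≤ ν (Iio s ∩ cellSet r k) + ν {s} := measure_union_le _ _
          _ = ν (Iio s ∩ cellSet r k) := by rw [hν, nu_singleton, add_zero]
        · exact measure_mono (inter_subset_inter Iio_subset_Iic_self Subset.rfl)
      have hle1 : ν S ≤ F s := measure_mono hsub2
      have hge1 : F s ≤ ν S := by
        rw [hFdef]
        simp only
        rw [hIicIio]
        exact measure_mono hsub1
      have hFsle : F s ≤ G a := by
        have hun : ⋃ n : ℕ, (Iic (s - 1 / (n + 1)) ∩ cellSet r k) = Iio s ∩ cellSet r k := by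
          ext y
          simp only [mem_iUnion, mem_inter_iff, mem_Iic, mem_Iio]
          constructor
          · rintro ⟨n, hy1, hy2⟩
            refine ⟨lt_of_le_of_lt hy1 ?_, hy2⟩
            have : (0:ℝ) < 1 / ((n:ℝ) + 1) := by positivity
            linarith
          · rintro ⟨hy1, hy2⟩
            obtain ⟨n, hn⟩ := exists_nat_one_div_lt (sub_pos.2 hy1)
            exact ⟨n, by linarith, hy2⟩
        have hdir : Directed (· ⊆ ·) (fun n : ℕ => Iic (s - 1 / (n + 1)) ∩ cellSet r k) := by
          apply Monotone.directed_le
          intro m n hmn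
          apply inter_subset_inter _ Subset.rfl
          apply Iic_subset_Iic.2
          have : 1 / ((n:ℝ) + 1) ≤ 1 / ((m:ℝ) + 1) := by
            apply div_le_div_of_nonneg_left one_pos.le (by positivity)
            exact_mod_cast by omega
          linarith
        have hsup := hdir.measure_iUnion (μ := ν)
        rw [hun] at hsup
        rw [hFdef]
        simp only
        rw [hIicIio, hsup]
        refine iSup_le fun n => ?_
        have hlt : s - 1 / ((n:ℝ) + 1) < s := by
          have : (0:ℝ) < 1 / ((n:ℝ) + 1) := by positivity
          linarith
        obtain ⟨x, hxS, hxgt⟩ := exists_lt_of_lt_csSup ⟨x₀, hx₀⟩ hlt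
        exact le_trans (hFmono hxgt.le) (hH1 x hxS)
      have hGaleFs : G a ≤ F s := by
        by_cases hs : (s : EReal) < r k.succ
        · have hx₀s : x₀ ≤ s := le_csSup hbdd hx₀
          have hsmem : s ∈ cellSet r k :=
            ⟨lt_of_lt_of_le hx₀.2.1 (EReal.coe_le_coe_iff.2 hx₀s), hs⟩
          obtain ⟨ε, hε, hball⟩ := Metric.isOpen_iff.1 (cell_isOpen r k) s hsmem
          set v : ℕ → ℝ := fun n => s + ε / 2 / (n + 1) with hvdef
          have hvpos : ∀ n : ℕ, (0:ℝ) < ε / 2 / (n + 1) := fun n => by positivity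
          have hvlt : ∀ n : ℕ, ε / 2 / ((n:ℝ) + 1) < ε := fun n => by
            have h1 : ε / 2 / ((n:ℝ) + 1) ≤ ε / 2 := by
              rw [div_le_iff₀ (by positivity)]
              nlinarith [hvpos n, hε.le]
            linarith
          have hvmem : ∀ n, v n ∈ cellSet r k := by
            intro n
            apply hball
            rw [Metric.mem_ball, Real.dist_eq, hvdef]
            simp only
            rw [add_sub_cancel_left, abs_of_pos (hvpos n)]
            exact hvlt n
          have hvnot : ∀ n, v n ∉ S := by
            intro n h
            have := le_csSup hbdd h
            have hgt : s < v n := by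
              rw [hvdef]; simp only; linarith [hvpos n]
            exact absurd this (not_le.2 hgt)
          have hanti : Antitone (fun n : ℕ => Iic (v n) ∩ cellSet r k) := by
            intro m n hmn
            apply inter_subset_inter _ Subset.rfl
            apply Iic_subset_Iic.2
            rw [hvdef]
            simp only
            have : ε / 2 / ((n:ℝ) + 1) ≤ ε / 2 / ((m:ℝ) + 1) := by
              apply div_le_div_of_nonneg_left (by positivity) (by positivity)
              exact_mod_cast by omega
            linarith
          have hinter : ⋂ n, (Iic (v n) ∩ cellSet r k) = Iic s ∩ cellSet r k := by
            ext y
            simp only [mem_iInter, mem_inter_iff, mem_Iic]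
            constructor
            · intro h
              refine ⟨?_, (h 0).2⟩
              by_contra hcon
              push_neg at hcon
              obtain ⟨n, hn⟩ := exists_nat_one_div_lt
                (div_pos (show (0:ℝ) < y - s by linarith) (show (0:ℝ) < ε / 2 by linarith))
              have h2 : ε / 2 / ((n:ℝ) + 1) < y - s := by
                rw [div_lt_iff₀ (by positivity)]
                rw [div_lt_div_iff₀ (by positivity) (show (0:ℝ) < ε / 2 by linarith)] at hn
                nlinarith
              have := (h n).1
              rw [hvdef] at this
              simp only at this
              linarith
            · intro h n
              refine ⟨le_trans h.1 ?_, h.2⟩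
              rw [hvdef]
              simp only
              linarith [hvpos n]
          have hFs : F s = ⨅ n, F (v n) := by
            rw [hFdef]
            simp only
            rw [← hinter]
            exact hanti.measure_iInter
              (fun n => (measurableSet_Iic.inter hCk).nullMeasurableSet)
              ⟨0, measure_ne_top _ _⟩
          rw [hFs]
          exact le_iInf fun n => hH2 (v n) (hvmem n) (hvnot n)
        · have hCksub : cellSet r k ⊆ Iic s ∩ cellSet r k := by
            intro y hy
            refine ⟨?_, hy⟩
            have h1 : (y : EReal) < (s : EReal) := lt_of_lt_of_le hy.2 (not_lt.1 hs)
            exact (EReal.coe_lt_coe_iff.1 h1).le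
          calc G a ≤ ν (cellSet r k) := hGle
            _ ≤ F s := measure_mono hCksub
      calc ν S = F s := le_antisymm hle1 hge1
        _ = G a := le_antisymm hFsle hGaleFs
    · -- unbounded case : S = cellSet r k
      have hSeq : S = cellSet r k := by
        apply Subset.antisymm inter_subset_right
        intro y hy
        obtain ⟨x, hxS, hyx⟩ := not_bddAbove_iff.1 hbdd y
        exact hdown x hxS y hy hyx.le
      rw [hSeq]
      apply le_antisymm
      · obtain ⟨u, humono, humem, hucof⟩ := exists_cofinal hrmono k
        have hun : ⋃ n, (Iic (u n) ∩ cellSet r k) = cellSet r k := by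
          ext y
          simp only [mem_iUnion, mem_inter_iff, mem_Iic]
          constructor
          · rintro ⟨n, _, hy2⟩
            exact hy2
          · intro hy
            obtain ⟨n, hn⟩ := hucof y hy
            exact ⟨n, hn, hy⟩
        have hdir : Directed (· ⊆ ·) (fun n : ℕ => Iic (u n) ∩ cellSet r k) :=
          Monotone.directed_le fun m n hmn =>
            inter_subset_inter (Iic_subset_Iic.2 (humono hmn)) Subset.rfl
        have hsup := hdir.measure_iUnion (μ := ν)
        rw [hun] at hsup
        rw [hsup]
        exact iSup_le fun n => hH1 (u n) (hSeq ▸ humem n)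
      · exact hGle

lemma map_sum_finset {α β : Type*} [MeasurableSpace α] [MeasurableSpace β] {ι : Type*}
    (s : Finset ι) (μ : ι → Measure α) {f : α → β} (hf : Measurable f) :
    (∑ i ∈ s, μ i).map f = ∑ i ∈ s, (μ i).map f := by
  classical
  induction s using Finset.cons_induction with
  | empty => simp
  | cons a s ha ih => rw [Finset.sum_cons, Finset.sum_cons, Measure.map_add _ _ hf, ih]

lemma nu_restrict_sum (hnn : ∀ x, 0 ≤ ρ x) (hint : Integrable ρ)
    (hr0 : r 0 = ⊥) (hrN : r (Fin.last N) = ⊤) (hrmono : StrictMono r) :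
    nu ρ = ∑ k : Fin N, (nu ρ).restrict (cellSet r k) := by
  have hd := cell_disjoint (N := N) hrmono
  have hm : ∀ k : Fin N, MeasurableSet (cellSet r k) := fun k => cell_meas r k
  have hcompl : nu ρ (⋃ k : Fin N, cellSet r k)ᶜ = 0 := by
    have hsub : (⋃ k : Fin N, cellSet r k)ᶜ ⊆ ⋃ j : Fin (N + 1), {x : ℝ | r j = (x : EReal)} := by
      intro x hx
      simp only [mem_compl_iff, mem_iUnion, not_exists] at hx
      by_contra hcon
      simp only [mem_iUnion, mem_setOf_eq, not_exists] at hcon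
      obtain ⟨k, hk⟩ := cell_cover hr0 hrN x hcon
      exact hx k hk
    apply measure_mono_null hsub
    apply withDensity_absolutelyContinuous volume _
    apply measure_iUnion_null
    intro j
    rcases ereal_cases (r j) with hj | ⟨b, hj⟩ | hj
    · have he : {x : ℝ | r j = (x : EReal)} = ∅ := by
        ext x
        simp only [mem_setOf_eq, mem_empty_iff_false, iff_false, hj]
        exact (EReal.bot_lt_coe x).ne
      rw [he, measure_empty]
    · apply measure_mono_null (show {x : ℝ | r j = (x : EReal)} ⊆ {b} from ?_)
        Real.volume_singleton
      intro x hx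
      have : (b : EReal) = (x : EReal) := by rw [← hj]; exact hx
      have : b = x := by exact_mod_cast this
      simp [this.symm]
    · have he : {x : ℝ | r j = (x : EReal)} = ∅ := by
        ext x
        simp only [mem_setOf_eq, mem_empty_iff_false, iff_false, hj]
        exact (EReal.coe_lt_top x).ne'
      rw [he, measure_empty]
  have hae : ∀ᵐ x ∂(nu ρ), x ∈ ⋃ k : Fin N, cellSet r k := by
    rw [MeasureTheory.ae_iff]
    have hseteq : {a : ℝ | ¬ a ∈ ⋃ k : Fin N, cellSet r k} = (⋃ k : Fin N, cellSet r k)ᶜ := rfl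
    rw [hseteq]
    exact hcompl
  conv_lhs => rw [← Measure.restrict_eq_self_of_ae_mem hae]
  rw [Measure.restrict_iUnion hd hm, Measure.sum_fintype]

lemma nu_map_T (hnn : ∀ x, 0 ≤ ρ x) (hint : Integrable ρ)
    (hr0 : r 0 = ⊥) (hrN : r (Fin.last N) = ⊤) (hrmono : StrictMono r)
    (hcellmass : ∀ k : Fin N, ∫ x in cellSet r k, ρ x = 1)
    (hTmeas : Measurable T)
    (hTmono : ∀ k : Fin N, MonotoneOn T (cellSet r k))
    (hTmaps : ∀ k : Fin N, ∀ x ∈ cellSet r k, T x ∈ cellSet r (k + 1))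
    (hTpush : ∀ k : Fin N, ∀ x ∈ cellSet r k,
      ∫ t in {t : ℝ | r k.castSucc < (t : EReal) ∧ t ≤ x}, ρ t
        = ∫ t in {t : ℝ | r (k + 1).castSucc < (t : EReal) ∧ t ≤ T x}, ρ t) :
    (nu ρ).map T = nu ρ := by
  have hres := nu_restrict_sum (r := r) hnn hint hr0 hrN hrmono
  calc (nu ρ).map T = (∑ k : Fin N, (nu ρ).restrict (cellSet r k)).map T := by rw [← hres]
    _ = ∑ k : Fin N, ((nu ρ).restrict (cellSet r k)).map T := map_sum_finset _ _ hTmeas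
    _ = ∑ k : Fin N, (nu ρ).restrict (cellSet r (k + 1)) :=
        Finset.sum_congr rfl fun k _ =>
          cell_map hnn hint hrmono hcellmass hTmeas hTmono hTmaps hTpush k
    _ = ∑ k : Fin N, (nu ρ).restrict (cellSet r k) :=
        Fintype.sum_equiv (Equiv.addRight (1 : Fin N)) _ _ (fun k => rfl)
    _ = nu ρ := hres.symm

lemma nu_map_iter (hnn : ∀ x, 0 ≤ ρ x) (hint : Integrable ρ)
    (hr0 : r 0 = ⊥) (hrN : r (Fin.last N) = ⊤) (hrmono : StrictMono r)
    (hcellmass : ∀ k : Fin N, ∫ x in cellSet r k, ρ x = 1)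
    (hTmeas : Measurable T)
    (hTmono : ∀ k : Fin N, MonotoneOn T (cellSet r k))
    (hTmaps : ∀ k : Fin N, ∀ x ∈ cellSet r k, T x ∈ cellSet r (k + 1))
    (hTpush : ∀ k : Fin N, ∀ x ∈ cellSet r k,
      ∫ t in {t : ℝ | r k.castSucc < (t : EReal) ∧ t ≤ x}, ρ t
        = ∫ t in {t : ℝ | r (k + 1).castSucc < (t : EReal) ∧ t ≤ T x}, ρ t) :
    ∀ n : ℕ, (nu ρ).map (T^[n]) = nu ρ := by
  intro n
  induction n with
  | zero => simp [Measure.map_id]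
  | succ n ih =>
    rw [Function.iterate_succ, ← Measure.map_map (hTmeas.iterate n) hTmeas,
      nu_map_T hnn hint hr0 hrN hrmono hcellmass hTmeas hTmono hTmaps hTpush, ih]

end CellMap

end MongeAux

/-- The symmetrized Monge state built from the transport map `T` and density `ρ`. -/
def mongeP (N : ℕ) (ρ : ℝ → ℝ) (T : ℝ → ℝ) : Measure (Fin N → ℝ) :=
  (Nat.factorial N : ℝ≥0∞)⁻¹ • ∑ σ : Equiv.Perm (Fin N),
    ((N : ℝ≥0∞)⁻¹ • volume.withDensity fun x => ENNReal.ofReal (ρ x)).map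
      (fun y => fun j => T^[(σ j : ℕ)] y)

/-- The 1D symmetrized Monge state is a symmetric probability measure on `ℝ^N` with
one-particle density `ρ`. -/
theorem stmt_9 (N : ℕ) [NeZero N] (hN : 1 ≤ N)
    (ρ : ℝ → ℝ) (hmeas : Measurable ρ) (hnn : ∀ x, 0 ≤ ρ x)
    (hint : Integrable ρ) (hmass : ∫ x, ρ x = N)
    (r : Fin (N + 1) → EReal) (hr0 : r 0 = ⊥) (hrN : r (Fin.last N) = ⊤)
    (hrmono : StrictMono r)
    -- each cell carries unit mass
    (hcellmass : ∀ k : Fin N, ∫ x in cellSet r k, ρ x = 1)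
    (T : ℝ → ℝ) (hTmeas : Measurable T)
    -- `T` is increasing on each cell and maps the `k`-th cell into the next one
    (hTmono : ∀ k : Fin N, MonotoneOn T (cellSet r k))
    (hTmaps : ∀ k : Fin N, ∀ x ∈ cellSet r k, T x ∈ cellSet r (k + 1))
    -- `T # (ρ 1_{(r_{k-1}, r_k)}) = ρ 1_{(r_k, r_{k+1})}`, i.e.
    -- `∫_{r_{k-1}}^x ρ = ∫_{r_k}^{T x} ρ` (cyclically for the last cell)
    (hTpush : ∀ k : Fin N, ∀ x ∈ cellSet r k,
      ∫ t in {t : ℝ | r k.castSucc < (t : EReal) ∧ t ≤ x}, ρ t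
        = ∫ t in {t : ℝ | r (k + 1).castSucc < (t : EReal) ∧ t ≤ T x}, ρ t) :
    IsProbabilityMeasure (mongeP N ρ T) ∧
    (∀ τ : Equiv.Perm (Fin N), (mongeP N ρ T).map (fun X => X ∘ τ) = mongeP N ρ T) ∧
    (mongeP N ρ T).map (fun X => X 0)
      = (N : ℝ≥0∞)⁻¹ • volume.withDensity fun x => ENNReal.ofReal (ρ x) := by
  classical
  set ν : Measure ℝ := volume.withDensity fun x => ENNReal.ofReal (ρ x) with hνdef
  have hνeq : ν = MongeAux.nu ρ := rfl
  set μ : Measure ℝ := (N : ℝ≥0∞)⁻¹ • ν with hμdef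
  have hg : ∀ σ : Equiv.Perm (Fin N),
      Measurable (fun y : ℝ => fun j : Fin N => T^[(σ j : ℕ)] y) :=
    fun σ => measurable_pi_lambda _ fun j => hTmeas.iterate _
  have hνit : ∀ n : ℕ, ν.map (T^[n]) = ν := by
    intro n
    rw [hνeq]
    exact MongeAux.nu_map_iter hnn hint hr0 hrN hrmono hcellmass hTmeas hTmono hTmaps hTpush n
  have hμit : ∀ n : ℕ, μ.map (T^[n]) = μ := by
    intro n
    rw [hμdef, Measure.map_smul, hνit n]
  have hμuniv : μ Set.univ = 1 := by
    rw [hμdef, Measure.smul_apply, smul_eq_mul, hνeq,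
      MongeAux.nu_univ hnn hint hmass, ENNReal.inv_mul_cancel]
    · exact Nat.cast_ne_zero.2 (NeZero.ne N)
    · exact ENNReal.natCast_ne_top N
  have hmonge : mongeP N ρ T = (Nat.factorial N : ℝ≥0∞)⁻¹ •
      ∑ σ : Equiv.Perm (Fin N), μ.map (fun y : ℝ => fun j : Fin N => T^[(σ j : ℕ)] y) := rfl
  have hfactne : (Nat.factorial N : ℝ≥0∞) ≠ 0 :=
    Nat.cast_ne_zero.2 (Nat.factorial_ne_zero N)
  have hfactnetop : (Nat.factorial N : ℝ≥0∞) ≠ ⊤ := ENNReal.natCast_ne_top _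
  refine ⟨?_, ?_, ?_⟩
  · constructor
    rw [hmonge, Measure.smul_apply, Measure.finset_sum_apply]
    have huniv : ∀ σ : Equiv.Perm (Fin N),
        (μ.map (fun y : ℝ => fun j : Fin N => T^[(σ j : ℕ)] y)) Set.univ = 1 := by
      intro σ
      rw [Measure.map_apply (hg σ) MeasurableSet.univ, Set.preimage_univ, hμuniv]
    rw [Finset.sum_congr rfl (fun σ _ => huniv σ), Finset.sum_const, Finset.card_univ,
      Fintype.card_perm, Fintype.card_fin, smul_eq_mul, nsmul_eq_mul, mul_one,
      ENNReal.inv_mul_cancel hfactne hfactnetop]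
  · intro τ
    have hτmeas : Measurable (fun X : Fin N → ℝ => X ∘ τ) :=
      measurable_pi_lambda _ fun j => measurable_pi_apply (τ j)
    rw [hmonge, Measure.map_smul, MongeAux.map_sum_finset _ _ hτmeas]
    congr 1
    have hterm : ∀ σ : Equiv.Perm (Fin N),
        (μ.map (fun y : ℝ => fun j : Fin N => T^[(σ j : ℕ)] y)).map (fun X => X ∘ τ)
          = μ.map (fun y : ℝ => fun j : Fin N => T^[((σ * τ) j : ℕ)] y) := by
      intro σ
      rw [Measure.map_map hτmeas (hg σ)]
      rfl
    rw [Finset.sum_congr rfl (fun σ _ => hterm σ)]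
    exact Fintype.sum_equiv (Equiv.mulRight τ) _ _ (fun σ => rfl)
  · have h0meas : Measurable (fun X : Fin N → ℝ => X 0) := measurable_pi_apply 0
    rw [hmonge, Measure.map_smul, MongeAux.map_sum_finset _ _ h0meas]
    have hterm : ∀ σ : Equiv.Perm (Fin N),
        (μ.map (fun y : ℝ => fun j : Fin N => T^[(σ j : ℕ)] y)).map (fun X => X 0) = μ := by
      intro σ
      rw [Measure.map_map h0meas (hg σ)]
      exact hμit _
    rw [Finset.sum_congr rfl (fun σ _ => hterm σ), Finset.sum_const, Finset.card_univ,
      Fintype.card_perm, Fintype.card_fin, ← Nat.cast_smul_eq_nsmul ℝ≥0∞, smul_smul,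
      ENNReal.inv_mul_cancel hfactne hfactnetop, one_smul]
end
end
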